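/- arXiv:1903.01746 — 3 statements merged into one kernel-verified Lean document; each statement's English description precedes it below -/
import Mathlib

section
/- Let H be a separable complex Hilbert space and let P be a bounded idempotent operator on H. Then P + P* - I is invertible and (2P - I)|2P - I|⁻¹ = (P + P* - I)|P + P* - I|⁻¹. -/
open ContinuousLinearMap

variable {H : Type*} [NormedAddCommGroup H] [InnerProductSpace ℂ H]
  [CompleteSpace H] [TopologicalSpace.SeparableSpace H]

/-- The absolute value `|A| = (A*A)^(1/2)` of a bounded operator. -/
noncomputable def absOp (A : H →L[ℂ] H) : H →L[ℂ] H := CFC.sqrt (star A * A)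

/-- A symmetry is a self-adjoint unitary: `J = J* = J⁻¹`. -/
def IsSymmetry (J : H →L[ℂ] H) : Prop := IsSelfAdjoint J ∧ J * J = 1

/-! With `s = 2p - 1` and `b = p + p⋆ - 1` one has `s² = 1`, `b² = 1 + (p - p⋆)⋆(p - p⋆) ≥ 1`,
`b s = p⋆p + (1 - p)⋆(1 - p) ≥ 0` and `s b = b s⋆`. The last two relations make `b²` commute with
`s` and `s⋆`, hence `|b|` commute with `|s|`, and then `(|b| |s|)² = (b s)²`. Uniqueness of positive
square roots gives `b s = |b| |s|`, so `s |s|⁻¹ = b⁻¹ |b| = b |b|⁻¹` because `|b|² = b²`. -/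

open CFC
open scoped Ring

section Ring

variable {R : Type*} [Ring R] {p q : R}

lemma IsIdempotentElem.two_mul_sub_one_mul_self (hp : IsIdempotentElem p) :
    (2 * p - 1) * (2 * p - 1) = 1 := by
  simp only [two_mul, mul_sub, sub_mul, mul_add, add_mul, mul_one, one_mul, hp.eq]
  abel

lemma IsIdempotentElem.two_mul_sub_one_mul_add_sub_one (hp : IsIdempotentElem p)
    (hq : IsIdempotentElem q) : (2 * p - 1) * (p + q - 1) = (p + q - 1) * (2 * q - 1) := by
  simp only [two_mul, mul_sub, sub_mul, mul_add, add_mul, mul_one, one_mul, hp.eq, hq.eq]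
  abel

lemma IsIdempotentElem.add_sub_one_mul_two_mul_sub_one (hp : IsIdempotentElem p) :
    (p + q - 1) * (2 * p - 1) = q * p + (1 - q) * (1 - p) := by
  simp only [two_mul, mul_sub, sub_mul, mul_add, add_mul, mul_one, one_mul, hp.eq]
  abel

lemma IsIdempotentElem.add_sub_one_mul_self (hp : IsIdempotentElem p) (hq : IsIdempotentElem q) :
    (p + q - 1) * (p + q - 1) = 1 - (p - q) * (p - q) := by
  simp only [mul_sub, sub_mul, mul_add, add_mul, mul_one, one_mul, hp.eq, hq.eq]
  abel

end Ring

section CStarAlgebra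

variable {A : Type*} [CStarAlgebra A] [PartialOrder A] [StarOrderedRing A]

lemma IsUnit.cfcAbs {a : A} (ha : IsUnit a) : IsUnit (abs a) :=
  (isUnit_sqrt_iff _ (star_mul_self_nonneg a)).2 (ha.star.mul ha)

lemma IsSelfAdjoint.abs_mul_abs_eq_mul {b s : A} (hb : IsSelfAdjoint b) (hbs : 0 ≤ b * s)
    (hsb : s * b = b * star s) : abs b * abs s = b * s := by
  have hsb' : star s * b = b * s := by
    simpa only [star_mul, hb.star_eq] using hbs.isSelfAdjoint.star_eq
  have hs : Commute (b * b) s := by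
    show b * b * s = s * (b * b)
    rw [mul_assoc, ← hsb', ← mul_assoc, ← hsb, mul_assoc]
  have hs' : Commute (b * b) (star s) := by
    show b * b * star s = star s * (b * b)
    rw [mul_assoc, ← hsb, ← mul_assoc, ← hsb', mul_assoc]
  have habs : Commute (abs b) (abs s) := by
    have h : Commute (star b * b) (star s * s) := hb.star_eq.symm ▸ hs'.mul_right hs
    exact ((h.cfcₙ_nnreal _).symm.cfcₙ_nnreal _).symm
  refine (sqrt_unique ?_ (habs.mul_nonneg (abs_nonneg b) (abs_nonneg s))).symm.trans
    (sqrt_mul_self _ hbs)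
  calc abs b * abs s * (abs b * abs s) = abs b * abs b * (abs s * abs s) :=
        habs.symm.mul_mul_mul_comm _ _
    _ = b * (b * star s) * s := by rw [abs_mul_abs, abs_mul_abs, hb.star_eq]; noncomm_ring
    _ = b * s * (b * s) := by rw [← hsb]; noncomm_ring

lemma IsSelfAdjoint.mul_ringInverse_abs_eq {b s : A} (hb : IsSelfAdjoint b) (hbu : IsUnit b)
    (hsu : IsUnit s) (hbs : 0 ≤ b * s) (hsb : s * b = b * star s) :
    s * (abs s)⁻¹ʳ = b * (abs b)⁻¹ʳ := by
  have h := hb.abs_mul_abs_eq_mul hbs hsb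
  calc s * (abs s)⁻¹ʳ = b⁻¹ʳ * (b * s) * (abs s)⁻¹ʳ := by
        rw [Ring.inverse_mul_cancel_left _ _ hbu]
    _ = b⁻¹ʳ * abs b := by
        rw [← h, ← mul_assoc, Ring.mul_inverse_cancel_right _ _ hsu.cfcAbs]
    _ = b⁻¹ʳ * (abs b * abs b) * (abs b)⁻¹ʳ := by
        rw [← mul_assoc, Ring.mul_inverse_cancel_right _ _ hbu.cfcAbs]
    _ = b * (abs b)⁻¹ʳ := by
        rw [abs_mul_abs, hb.star_eq, ← mul_assoc, Ring.inverse_mul_cancel _ hbu, one_mul]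

-- Inside these statements a bare `star` would resolve to `IsIdempotentElem.star`.
variable {p : A}

lemma IsIdempotentElem.isUnit_add_star_sub_one (hp : IsIdempotentElem p) :
    IsUnit (p + Star.star p - 1) := by
  have hskew : Star.star (p - Star.star p) = -(p - Star.star p) := by simp
  have hsq : 1 ≤ (p + Star.star p - 1) * (p + Star.star p - 1) := by
    rw [hp.add_sub_one_mul_self hp.star, sub_eq_add_neg, ← neg_mul, ← hskew]
    exact le_add_of_nonneg_right (star_mul_self_nonneg _)
  exact isUnit_mul_self_iff.mp (CStarAlgebra.isUnit_of_le 1 hsq)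

theorem IsIdempotentElem.two_mul_sub_one_mul_ringInverse_abs_eq (hp : IsIdempotentElem p) :
    (2 * p - 1) * (abs (2 * p - 1))⁻¹ʳ =
      (p + Star.star p - 1) * (abs (p + Star.star p - 1))⁻¹ʳ := by
  have hbs : 0 ≤ (p + Star.star p - 1) * (2 * p - 1) := by
    rw [hp.add_sub_one_mul_two_mul_sub_one]
    simpa only [star_sub, star_one] using
      add_nonneg (star_mul_self_nonneg p) (star_mul_self_nonneg (1 - p))
  have hsb : (2 * p - 1) * (p + Star.star p - 1) =
      (p + Star.star p - 1) * Star.star (2 * p - 1) := by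
    rw [hp.two_mul_sub_one_mul_add_sub_one hp.star]
    simp [two_mul]
  have hs := hp.two_mul_sub_one_mul_self
  exact ((IsSelfAdjoint.add_star_self p).sub (.one A)).mul_ringInverse_abs_eq
    hp.isUnit_add_star_sub_one ⟨⟨_, _, hs, hs⟩, rfl⟩ hbs hsb

end CStarAlgebra

theorem stmt_2 (P : H →L[ℂ] H) (hP : P * P = P) :
    IsUnit (P + star P - 1) ∧
    ((2 : ℂ) • P - 1) * Ring.inverse (absOp ((2 : ℂ) • P - 1)) =
      (P + star P - 1) * Ring.inverse (absOp (P + star P - 1)) := by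
  have hP : IsIdempotentElem P := hP
  rw [two_smul, ← two_mul]
  exact ⟨hP.isUnit_add_star_sub_one, hP.two_mul_sub_one_mul_ringInverse_abs_eq⟩
end

section
/- Let H be a separable complex Hilbert space and let P be a bounded idempotent operator on H. Then the operator J₀ := (2P - I)|2P - I|⁻¹ is a symmetry with J₀P ≥ 0, and it is the minimum of the set of all symmetries J with JP ≥ 0 in the Loewner partial order; that is, for every symmetry J with JP ≥ 0 one has J ≥ J₀. -/
/-!
The argument works in any unital C⋆-algebra. Put `T = 2P - 1`, so `T² = 1`.
Then `T |T| T` is a positive square root of `T T* = (T* T)⁻¹`, hence `T |T| T = |T|⁻¹` and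
`J₀ = T |T|⁻¹ = |T| T` is a symmetry with `J₀ P = |T| P ≥ 0`.
If `J` is a symmetry with `J P ≥ 0`, then `S = J T` is self-adjoint with `|S| = |T|`, and the
symmetry `S |S|⁻¹` sends the positive element `|S| P` to `J P ≥ 0`, which forces `S P = |S| P`.
Multiplying on the right by `T = 2P - 1` then gives `J - J₀ = (S - |S|) T = |S| - S ≥ 0`.
-/

open ContinuousLinearMap

variable {H : Type*} [NormedAddCommGroup H] [InnerProductSpace ℂ H]
  [CompleteSpace H] [TopologicalSpace.SeparableSpace H]

open scoped Ring

lemma Ring.inverse_star_mul_self_of_mul_self_eq_one {R : Type*} [MonoidWithZero R] [StarMul R]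
    {T : R} (hT : T * T = 1) : (star T * T)⁻¹ʳ = T * star T := by
  have hT' : star T * star T = 1 := by rw [← star_mul, hT, star_one]
  exact Ring.inverse_unit ⟨star T * T, T * star T,
    by rw [mul_assoc, ← mul_assoc T, hT, one_mul, hT'],
    by rw [mul_assoc, ← mul_assoc (star T), hT', one_mul, hT]⟩

lemma IsIdempotentElem.two_smul_sub_one_mul_self {R : Type*} [Ring R] [Algebra ℂ R] {P : R}
    (hP : IsIdempotentElem P) : ((2 : ℂ) • P - 1) * ((2 : ℂ) • P - 1) = 1 := by
  rw [mul_sub, mul_smul_comm, sub_mul, smul_mul_assoc, hP.eq, one_mul, mul_one]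
  module

lemma IsIdempotentElem.two_smul_sub_one_mul {R : Type*} [Ring R] [Algebra ℂ R] {P : R}
    (hP : IsIdempotentElem P) : ((2 : ℂ) • P - 1) * P = P := by
  rw [sub_mul, smul_mul_assoc, hP.eq, one_mul]
  module

section CStarAlgebra

variable {A : Type*} [CStarAlgebra A] [PartialOrder A] [StarOrderedRing A]

lemma IsUnit.cfcAbs_s13 {T : A} (hT : IsUnit T) : IsUnit (CFC.abs T) :=
  (CFC.isUnit_sqrt_iff _ (star_mul_self_nonneg T)).2 (hT.star.mul hT)

lemma cfcAbs_star_of_mul_self_eq_one {T : A} (hT : T * T = 1) :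
    CFC.abs (star T) = (CFC.abs T)⁻¹ʳ := by
  rw [CFC.abs, CFC.abs, ← CFC.sqrt_ringInverse, Ring.inverse_star_mul_self_of_mul_self_eq_one hT,
    star_star]

lemma mul_cfcAbs_mul_of_mul_self_eq_one {T : A} (hT : T * T = 1) :
    T * CFC.abs T * T = (CFC.abs T)⁻¹ʳ := by
  have hT' : star T * star T = 1 := by rw [← star_mul, hT, star_one]
  have cancel (X : A) : T * (T * X) = X := by rw [← mul_assoc, hT, one_mul]
  have cancel' (X : A) : star T * (star T * X) = X := by rw [← mul_assoc, hT', one_mul]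
  have hn := CFC.abs_nonneg T
  have hsq (X : A) : CFC.abs T * (CFC.abs T * X) = star T * (T * X) := by
    rw [← mul_assoc, CFC.abs_mul_abs, mul_assoc]
  rw [← cfcAbs_star_of_mul_self_eq_one hT]
  conv_rhs => rw [CFC.abs, star_star]
  refine (CFC.sqrt_unique ?_ ?_).symm
  · simp only [mul_assoc, cancel, hsq, hT, mul_one]
  · calc T * CFC.abs T * T = star T * (star T * T) * (CFC.abs T * T) := by
          simp only [mul_assoc, cancel']
      _ = star (CFC.abs T * T) * CFC.abs T * (CFC.abs T * T) := by
          rw [← CFC.abs_mul_abs, star_mul, hn.isSelfAdjoint.star_eq]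
          simp only [mul_assoc]
      _ ≥ 0 := star_left_conjugate_nonneg hn _

lemma mul_ringInverse_cfcAbs_of_mul_self_eq_one {T : A} (hT : T * T = 1) :
    T * (CFC.abs T)⁻¹ʳ = CFC.abs T * T := by
  rw [← mul_cfcAbs_mul_of_mul_self_eq_one hT, ← mul_assoc, ← mul_assoc, hT, one_mul]

lemma star_mul_cfcAbs_of_mul_self_eq_one {T : A} (hT : T * T = 1) :
    star T * CFC.abs T = CFC.abs T * T := by
  have cancel (X : A) : T * (T * X) = X := by rw [← mul_assoc, hT, one_mul]
  calc star T * CFC.abs T = CFC.abs T * (CFC.abs T * (T * CFC.abs T * T)) * T := by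
        rw [← mul_assoc, CFC.abs_mul_abs]
        simp only [mul_assoc, cancel, hT, mul_one]
    _ = CFC.abs T * T := by
        rw [mul_cfcAbs_mul_of_mul_self_eq_one hT,
          Ring.mul_inverse_cancel _ (IsUnit.cfcAbs_s13 ⟨⟨T, T, hT, hT⟩, rfl⟩), mul_one]

lemma isSelfAdjoint_cfcAbs_mul_of_mul_self_eq_one {T : A} (hT : T * T = 1) :
    IsSelfAdjoint (CFC.abs T * T) := by
  rw [IsSelfAdjoint, star_mul, (CFC.abs_nonneg T).isSelfAdjoint.star_eq,
    star_mul_cfcAbs_of_mul_self_eq_one hT]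

lemma cfcAbs_mul_mul_cfcAbs_mul_of_mul_self_eq_one {T : A} (hT : T * T = 1) :
    CFC.abs T * T * (CFC.abs T * T) = 1 := by
  rw [mul_assoc, ← mul_assoc T, mul_cfcAbs_mul_of_mul_self_eq_one hT,
    Ring.mul_inverse_cancel _ (IsUnit.cfcAbs_s13 ⟨⟨T, T, hT, hT⟩, rfl⟩)]

lemma mul_eq_self_of_mul_self_eq_one_of_nonneg {V R : A} (hV : IsSelfAdjoint V)
    (hV2 : V * V = 1) (hR : 0 ≤ R) (hVR : 0 ≤ V * R) : V * R = R := by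
  have hRV : R * V = V * R := by
    simpa only [star_mul, hV.star_eq, hR.isSelfAdjoint.star_eq] using hVR.isSelfAdjoint.star_eq
  have hF : IsSelfAdjoint (1 - V) := (IsSelfAdjoint.one A).sub hV
  have hFV : (1 - V) * V = -(1 - V) := by rw [sub_mul, one_mul, hV2, neg_sub]
  have hRF : R * (1 - V) = (1 - V) * R := by rw [mul_sub, sub_mul, mul_one, one_mul, hRV]
  have hFRF : (1 - V) * R * (1 - V) = 0 := by
    refine le_antisymm ?_ (by simpa only [hF.star_eq] using star_left_conjugate_nonneg hR (1 - V))
    have h := star_left_conjugate_nonneg hVR (1 - V)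
    rwa [hF.star_eq, ← mul_assoc, hFV, neg_mul, neg_mul, neg_nonneg] at h
  have hFR : (1 - V) * R = 0 := by
    rw [← CStarRing.star_mul_self_eq_zero_iff, star_mul, hF.star_eq, hR.isSelfAdjoint.star_eq,
      hRF, ← mul_assoc, hFRF, zero_mul]
  rwa [sub_mul, one_mul, sub_eq_zero, eq_comm] at hFR

lemma IsSelfAdjoint.mul_eq_cfcAbs_mul_of_nonneg {S X : A} (hS : IsSelfAdjoint S)
    (hSu : IsUnit (CFC.abs S)) (habs : 0 ≤ CFC.abs S * X) (hSX : 0 ≤ S * X) :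
    S * X = CFC.abs S * X := by
  have hinv : IsSelfAdjoint (CFC.abs S)⁻¹ʳ :=
    ((CFC.ringInverse_nonneg_iff_nonneg_of_isUnit hSu).2 (CFC.abs_nonneg S)).isSelfAdjoint
  have hcomm : Commute (CFC.abs S)⁻¹ʳ S := by
    rw [Ring.inverse_of_isUnit hSu]
    exact (CFC.commute_abs_self S hS.isStarNormal).units_inv_left
  have hV : IsSelfAdjoint (S * (CFC.abs S)⁻¹ʳ) := by
    rw [IsSelfAdjoint, star_mul, hinv.star_eq, hS.star_eq]
    exact hcomm.eq
  have hV2 : S * (CFC.abs S)⁻¹ʳ * (S * (CFC.abs S)⁻¹ʳ) = 1 := by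
    rw [hcomm.mul_mul_mul_comm]
    nth_rewrite 1 [← hS.star_eq]
    rw [← CFC.abs_mul_abs, mul_assoc, Ring.mul_inverse_cancel_left _ _ hSu,
      Ring.mul_inverse_cancel _ hSu]
  have hVX : S * (CFC.abs S)⁻¹ʳ * (CFC.abs S * X) = S * X := by
    rw [mul_assoc, Ring.inverse_mul_cancel_left _ _ hSu]
  rw [← hVX]
  exact mul_eq_self_of_mul_self_eq_one_of_nonneg hV hV2 habs (hVX ▸ hSX)

lemma cfcAbs_mul_nonneg_of_isIdempotentElem {P T : A} (hP : IsIdempotentElem P)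
    (hT : T = (2 : ℂ) • P - 1) : 0 ≤ CFC.abs T * P := by
  subst hT
  have hPn : star P * CFC.abs ((2 : ℂ) • P - 1) = CFC.abs ((2 : ℂ) • P - 1) * P := by
    have h := star_mul_cfcAbs_of_mul_self_eq_one hP.two_smul_sub_one_mul_self
    simp only [star_sub, star_smul, star_one, star_ofNat, sub_mul, mul_sub, smul_mul_assoc,
      mul_smul_comm, one_mul, mul_one, sub_left_inj] at h
    exact smul_right_injective A two_ne_zero h
  calc 0 ≤ star P * CFC.abs ((2 : ℂ) • P - 1) * P :=
        star_left_conjugate_nonneg (CFC.abs_nonneg _) P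
    _ = CFC.abs ((2 : ℂ) • P - 1) * P := by rw [hPn, mul_assoc, hP.eq]

lemma cfcAbs_mul_le_of_isIdempotentElem {P T J : A} (hP : IsIdempotentElem P)
    (hT : T = (2 : ℂ) • P - 1) (hJ : IsSelfAdjoint J) (hJ2 : J * J = 1) (hJP : 0 ≤ J * P) :
    CFC.abs T * T ≤ J := by
  have hT2 : T * T = 1 := hT ▸ hP.two_smul_sub_one_mul_self
  have hTP : T * P = P := hT ▸ hP.two_smul_sub_one_mul
  have mul_T (X : A) : X * T = (2 : ℂ) • (X * P) - X := by
    rw [hT, mul_sub, mul_smul_comm, mul_one]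
  have hPJ : star P * J = J * P := by
    simpa only [star_mul, hJ.star_eq] using hJP.isSelfAdjoint.star_eq
  have hS : IsSelfAdjoint (J * T) := by
    rw [IsSelfAdjoint, star_mul, hJ.star_eq, mul_T, hT, star_sub, star_smul, star_one, star_ofNat,
      sub_mul, smul_mul_assoc, hPJ, one_mul]
  have habs : CFC.abs (J * T) = CFC.abs T := by
    rw [CFC.abs, CFC.abs, star_mul, hJ.star_eq, mul_assoc, ← mul_assoc J J, hJ2, one_mul]
  have hSP : J * T * P = CFC.abs T * P := by
    rw [← habs]
    refine hS.mul_eq_cfcAbs_mul_of_nonneg ?_ ?_ ?_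
    · exact habs ▸ IsUnit.cfcAbs_s13 ⟨⟨T, T, hT2, hT2⟩, rfl⟩
    · exact habs ▸ cfcAbs_mul_nonneg_of_isIdempotentElem hP hT
    · rwa [mul_assoc, hTP]
  have hdiff : J - CFC.abs T * T = CFC.abs (J * T) - J * T :=
    calc J - CFC.abs T * T = (J * T - CFC.abs T) * T := by rw [sub_mul, mul_assoc, hT2, mul_one]
      _ = CFC.abs (J * T) - J * T := by
        rw [mul_T, sub_mul, hSP, sub_self, smul_zero, zero_sub, neg_sub, habs]
  rw [← sub_nonneg, hdiff, CFC.abs_sub_self _ hS]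
  exact nsmul_nonneg (CFC.negPart_nonneg _) 2

end CStarAlgebra

theorem stmt_13 (P : H →L[ℂ] H) (hP : P * P = P) :
    IsSymmetry (((2 : ℂ) • P - 1) * Ring.inverse (absOp ((2 : ℂ) • P - 1))) ∧
    ((((2 : ℂ) • P - 1) * Ring.inverse (absOp ((2 : ℂ) • P - 1))) * P).IsPositive ∧
    ∀ J, IsSymmetry J → (J * P).IsPositive →
      (J - ((2 : ℂ) • P - 1) * Ring.inverse (absOp ((2 : ℂ) • P - 1))).IsPositive := by
  have hT := IsIdempotentElem.two_smul_sub_one_mul_self hP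
  have hJ₀ : ((2 : ℂ) • P - 1) * Ring.inverse (absOp ((2 : ℂ) • P - 1)) =
      CFC.abs ((2 : ℂ) • P - 1) * ((2 : ℂ) • P - 1) :=
    mul_ringInverse_cfcAbs_of_mul_self_eq_one hT
  simp only [hJ₀, ← nonneg_iff_isPositive, sub_nonneg]
  refine ⟨⟨isSelfAdjoint_cfcAbs_mul_of_mul_self_eq_one hT,
    cfcAbs_mul_mul_cfcAbs_mul_of_mul_self_eq_one hT⟩, ?_,
    fun J hJ hJP => cfcAbs_mul_le_of_isIdempotentElem hP rfl hJ.1 hJ.2 hJP⟩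
  rw [mul_assoc, IsIdempotentElem.two_smul_sub_one_mul hP]
  exact cfcAbs_mul_nonneg_of_isIdempotentElem hP rfl
end

section
/- Let H be a separable complex Hilbert space, let P be a bounded idempotent operator on H, and let J be a symmetry. Then JPJ = I - P* if and only if the operator J' := i J (2P - I)|2P - I|⁻¹ is a symmetry satisfying J'PJ' = I - P (where i = √(-1)). -/
open ContinuousLinearMap

variable {H : Type*} [NormedAddCommGroup H] [InnerProductSpace ℂ H]
  [CompleteSpace H] [TopologicalSpace.SeparableSpace H]

/-!
Put `T = 2P - 1`, an involution, `a = |T|` and `V = T a⁻¹`. Both `T a T` and `a⁻¹` are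
positive square roots of `T T* = (T* T)⁻¹`, so they coincide; hence `V = a T` is a symmetry
with `T = V a` and `V a V = a⁻¹`. Both sides of the equivalence then say `J V J = -V` and
`J a J = a⁻¹`. For `J' = i J V` this is direct: `J'` is self-adjoint iff `J` anticommutes
with `V`, which already forces `J'² = 1`, and then `J' P J' = 1 - P` reads `J a J = V a V`.
For `J P J = 1 - P*`, i.e. `J T J = -T*`, conjugation by `J` maps `a² = T* T` to
`T T* = a⁻²`, so `J a J = a⁻¹` by uniqueness of positive square roots.
-/

open scoped Ring

section Conjugation

variable {M : Type*} [Monoid M] {j : M}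

theorem conj_mul_conj_of_mul_self_eq_one (hjj : j * j = 1) (x y : M) :
    j * x * j * (j * y * j) = j * (x * y) * j := by
  simp only [mul_assoc, ← mul_assoc j j, hjj, one_mul]

theorem conj_conj_of_mul_self_eq_one (hjj : j * j = 1) (x : M) : j * (j * x * j) * j = x := by
  simp only [mul_assoc, ← mul_assoc j j, hjj, one_mul, mul_one]

theorem mul_eq_iff_eq_mul_of_mul_self_eq_one {v : M} (hvv : v * v = 1) {x y : M} :
    x * v = y ↔ x = y * v := by
  constructor <;> rintro rfl <;> rw [mul_assoc, hvv, mul_one]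

end Conjugation

section StarInvolution

variable {M : Type*} [MonoidWithZero M] [StarMul M] {t : M}

theorem star_mul_self_mul_mul_star (ht : t * t = 1) : star t * t * (t * star t) = 1 := by
  rw [mul_assoc, ← mul_assoc t, ht, one_mul, ← star_mul, ht, star_one]

theorem mul_star_mul_star_mul_self (ht : t * t = 1) : t * star t * (star t * t) = 1 := by
  rw [mul_assoc, ← mul_assoc (star t), ← star_mul, ht, star_one, one_mul, ht]

theorem Ring.inverse_star_mul_self_of_mul_self_eq_one_s17 (ht : t * t = 1) :
    (star t * t)⁻¹ʳ = t * star t :=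
  Ring.inverse_unit ⟨_, _, star_mul_self_mul_mul_star ht, mul_star_mul_star_mul_self ht⟩

end StarInvolution

section StarRing

variable {R : Type*} [Ring R] [StarRing R] {j v : R}

theorem star_mul_eq_neg_iff (hj : IsSelfAdjoint j) (hjj : j * j = 1) (hv : IsSelfAdjoint v) :
    star (j * v) = -(j * v) ↔ j * v * j = -v := by
  rw [star_mul, hj.star_eq, hv.star_eq]
  constructor
  · intro h
    rw [mul_assoc, h, mul_neg, ← mul_assoc, hjj, one_mul]
  · intro h
    calc v * j = j * (j * v * j) := by simp only [← mul_assoc, hjj, one_mul]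
      _ = -(j * v) := by rw [h, mul_neg]

theorem conj_star_mul_self_of_conj_eq_neg_star (hj : IsSelfAdjoint j) (hjj : j * j = 1) {t : R}
    (h : j * t * j = -star t) : j * (star t * t) * j = t * star t := by
  have hstar : j * star t * j = -t := by
    simpa only [star_mul, star_neg, star_star, hj.star_eq, mul_assoc] using congrArg star h
  rw [← conj_mul_conj_of_mul_self_eq_one hjj, h, hstar, neg_mul_neg]

end StarRing

section CStarAlgebra

variable {A : Type*} [CStarAlgebra A] [PartialOrder A] [StarOrderedRing A]

theorem eq_of_mul_self_eq_mul_self_of_nonneg {x y : A} (hx : 0 ≤ x) (hy : 0 ≤ y)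
    (h : x * x = y * y) : x = y := by
  rw [← CFC.sqrt_mul_self x, h, CFC.sqrt_mul_self y]

variable {t : A}

theorem isUnit_abs_of_mul_self_eq_one (ht : t * t = 1) : IsUnit (CFC.abs t) :=
  (CFC.isUnit_sqrt_iff _ (star_mul_self_nonneg t)).2
    ⟨⟨_, _, star_mul_self_mul_mul_star ht, mul_star_mul_star_mul_self ht⟩, rfl⟩

theorem star_mul_abs_mul_abs (ht : t * t = 1) : star t * (CFC.abs t * CFC.abs t) = t := by
  rw [CFC.abs_mul_abs, ← mul_assoc, ← star_mul, ht, star_one, one_mul]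

theorem mul_abs_mul_of_mul_self_eq_one (ht : t * t = 1) :
    t * CFC.abs t * t = (CFC.abs t)⁻¹ʳ := by
  have ha : 0 ≤ CFC.abs t := CFC.abs_nonneg t
  have hsq : t * CFC.abs t * t * (t * CFC.abs t * t) = t * star t := by
    calc t * CFC.abs t * t * (t * CFC.abs t * t)
        = t * CFC.abs t * (t * t) * CFC.abs t * t := by noncomm_ring
      _ = t * (star t * t) * t := by rw [ht, mul_one, ← CFC.abs_mul_abs]; noncomm_ring
      _ = t * star t := by rw [mul_assoc, mul_assoc, ht, mul_one]
  have hnonneg : 0 ≤ t * CFC.abs t * t := by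
    have hconj : t * CFC.abs t * t =
        star t * (star (CFC.abs t) * CFC.abs t * CFC.abs t) * t := by
      calc t * CFC.abs t * t = star t * (CFC.abs t * CFC.abs t) * CFC.abs t * t := by
            rw [star_mul_abs_mul_abs ht]
        _ = _ := by rw [ha.isSelfAdjoint.star_eq]; noncomm_ring
    exact hconj ▸ star_left_conjugate_nonneg (star_left_conjugate_nonneg ha _) t
  change _ = (CFC.sqrt (star t * t))⁻¹ʳ
  rw [← CFC.sqrt_ringInverse, Ring.inverse_star_mul_self_of_mul_self_eq_one_s17 ht]
  exact (CFC.sqrt_unique hsq hnonneg).symm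

theorem mul_inverse_abs_eq_abs_mul (ht : t * t = 1) : t * (CFC.abs t)⁻¹ʳ = CFC.abs t * t := by
  rw [← mul_abs_mul_of_mul_self_eq_one ht, ← mul_assoc, ← mul_assoc, ht, one_mul]

theorem inverse_abs_mul_eq_mul_abs (ht : t * t = 1) : (CFC.abs t)⁻¹ʳ * t = t * CFC.abs t := by
  rw [← mul_abs_mul_of_mul_self_eq_one ht, mul_assoc, ht, mul_one]

theorem isSelfAdjoint_mul_inverse_abs (ht : t * t = 1) :
    IsSelfAdjoint (t * (CFC.abs t)⁻¹ʳ) := by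
  have ha : IsSelfAdjoint (CFC.abs t) := (CFC.abs_nonneg t).isSelfAdjoint
  rw [isSelfAdjoint_iff, star_mul, ha.ringInverse.star_eq, mul_inverse_abs_eq_abs_mul ht]
  calc (CFC.abs t)⁻¹ʳ * star t = (CFC.abs t)⁻¹ʳ * (star t * t * t) := by
        rw [mul_assoc, ht, mul_one]
    _ = CFC.abs t * t := by
        rw [← CFC.abs_mul_abs, ← mul_assoc, ← mul_assoc,
          Ring.inverse_mul_cancel _ (isUnit_abs_of_mul_self_eq_one ht), one_mul]

theorem mul_inverse_abs_mul_self (ht : t * t = 1) :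
    t * (CFC.abs t)⁻¹ʳ * (t * (CFC.abs t)⁻¹ʳ) = 1 := by
  rw [mul_assoc, ← mul_assoc _ t, inverse_abs_mul_eq_mul_abs ht, ← mul_assoc, ← mul_assoc, ht,
    one_mul, Ring.mul_inverse_cancel _ (isUnit_abs_of_mul_self_eq_one ht)]

theorem conj_eq_neg_star_iff {j v a : A} (hj : IsSelfAdjoint j) (hjj : j * j = 1)
    (hv : IsSelfAdjoint v) (hvv : v * v = 1) (ha : 0 ≤ a) (hau : IsUnit a)
    (hvav : v * a * v = a⁻¹ʳ) (hvat : v * a = t) :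
    j * t * j = -star t ↔ j * v * j = -v ∧ j * a * j = a⁻¹ʳ := by
  subst hvat
  have hstar : star (v * a) = a * v := by rw [star_mul, ha.isSelfAdjoint.star_eq, hv.star_eq]
  have hv_inv : v * a⁻¹ʳ = a * v := by rw [← hvav, ← mul_assoc, ← mul_assoc, hvv, one_mul]
  constructor
  · intro h
    have hjaj : j * a * j = a⁻¹ʳ := by
      refine eq_of_mul_self_eq_mul_self_of_nonneg ?_
        ((CFC.ringInverse_nonneg_iff_nonneg_of_isUnit hau).2 ha) ?_
      · simpa only [hj.star_eq] using star_left_conjugate_nonneg ha j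
      · have haa : a * a = star (v * a) * (v * a) := by
          rw [hstar, mul_assoc, ← mul_assoc v, hvv, one_mul]
        rw [conj_mul_conj_of_mul_self_eq_one hjj, haa,
          conj_star_mul_self_of_conj_eq_neg_star hj hjj h, hstar, ← hvav,
          conj_mul_conj_of_mul_self_eq_one hvv]
        simp only [mul_assoc]
    refine ⟨?_, hjaj⟩
    calc j * v * j = j * (v * a) * j * (j * a⁻¹ʳ * j) := by
          rw [conj_mul_conj_of_mul_self_eq_one hjj, mul_assoc v, Ring.mul_inverse_cancel _ hau,
            mul_one]
      _ = -(a * v * a) := by rw [h, hstar, ← hjaj, conj_conj_of_mul_self_eq_one hjj, neg_mul]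
      _ = -v := by rw [← hv_inv, mul_assoc, Ring.inverse_mul_cancel _ hau, mul_one]
  · rintro ⟨hjvj, hjaj⟩
    rw [← conj_mul_conj_of_mul_self_eq_one hjj, hjvj, hjaj, hstar, neg_mul, hv_inv]

end CStarAlgebra

section ComplexAlgebra

variable {R : Type*} [Ring R] [Algebra ℂ R]

theorem two_smul_sub_one_mul_self {p : R} (hp : p * p = p) :
    ((2 : ℂ) • p - 1) * ((2 : ℂ) • p - 1) = 1 := by
  simp only [sub_mul, mul_sub, smul_mul_assoc, mul_smul_comm, hp, one_mul, mul_one]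
  module

theorem I_smul_mul_mul_I_smul (k p : R) :
    Complex.I • k * p * (Complex.I • k) = -(k * p * k) := by
  simp only [smul_mul_assoc, mul_smul_comm, smul_smul, Complex.I_mul_I, neg_smul, one_smul]

theorem I_smul_mul_self (k : R) : Complex.I • k * (Complex.I • k) = -(k * k) := by
  simpa only [mul_one] using I_smul_mul_mul_I_smul k 1

theorem conj_eq_sub_one_iff {k p : R} (hkk : k * k = -1) :
    k * p * k = p - 1 ↔ k * ((2 : ℂ) • p - 1) * k = (2 : ℂ) • p - 1 := by
  rw [mul_sub, sub_mul, mul_one, hkk, mul_smul_comm, smul_mul_assoc]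
  constructor
  · intro h
    rw [h]
    module
  · intro h
    linear_combination (norm := module) (2⁻¹ : ℂ) • h

variable [StarRing R] [StarModule ℂ R]

theorem isSelfAdjoint_I_smul_iff {k : R} : IsSelfAdjoint (Complex.I • k) ↔ star k = -k := by
  rw [isSelfAdjoint_iff, star_smul, Complex.star_def, Complex.conj_I, neg_smul, neg_eq_iff_eq_neg,
    ← smul_neg, smul_right_inj Complex.I_ne_zero]

theorem conj_eq_one_sub_star_iff {j p : R} (hjj : j * j = 1) :
    j * p * j = 1 - star p ↔ j * ((2 : ℂ) • p - 1) * j = -star ((2 : ℂ) • p - 1) := by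
  rw [mul_sub, sub_mul, mul_one, hjj, mul_smul_comm, smul_mul_assoc, star_sub, star_smul,
    star_one, star_ofNat]
  constructor
  · intro h
    rw [h]
    module
  · intro h
    linear_combination (norm := module) (2⁻¹ : ℂ) • h

theorem I_smul_conj_isSymmetry_iff {j v a p : R} (hj : IsSelfAdjoint j) (hjj : j * j = 1)
    (hv : IsSelfAdjoint v) (hvv : v * v = 1) (hvap : v * a = (2 : ℂ) • p - 1) :
    (IsSelfAdjoint (Complex.I • (j * v)) ∧ Complex.I • (j * v) * (Complex.I • (j * v)) = 1) ∧
        Complex.I • (j * v) * p * (Complex.I • (j * v)) = 1 - p ↔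
      j * v * j = -v ∧ j * a * j = v * a * v := by
  have hsymm : (IsSelfAdjoint (Complex.I • (j * v)) ∧
      Complex.I • (j * v) * (Complex.I • (j * v)) = 1) ↔ j * v * j = -v := by
    rw [isSelfAdjoint_I_smul_iff, star_mul_eq_neg_iff hj hjj hv]
    refine ⟨And.left, fun h => ⟨h, ?_⟩⟩
    rw [I_smul_mul_self, neg_eq_iff_eq_neg, ← mul_assoc, h, neg_mul, hvv]
  rw [hsymm]
  refine and_congr_right fun h => ?_
  have hkk : j * v * (j * v) = -1 := by rw [← mul_assoc, h, neg_mul, hvv]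
  have hconj : j * v * (v * a) * (j * v) = j * a * j * v := by
    simp only [mul_assoc, ← mul_assoc v v a, hvv, one_mul]
  rw [I_smul_mul_mul_I_smul, neg_eq_iff_eq_neg, neg_sub, conj_eq_sub_one_iff hkk, ← hvap,
    hconj, mul_eq_iff_eq_mul_of_mul_self_eq_one hvv]

end ComplexAlgebra

theorem stmt_17 (P J : H →L[ℂ] H) (hP : P * P = P) (hJ : IsSymmetry J) :
    J * P * J = 1 - star P ↔
      (IsSymmetry (Complex.I • (J * (((2 : ℂ) • P - 1) * Ring.inverse (absOp ((2 : ℂ) • P - 1))))) ∧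
        (Complex.I • (J * (((2 : ℂ) • P - 1) * Ring.inverse (absOp ((2 : ℂ) • P - 1))))) * P *
          (Complex.I • (J * (((2 : ℂ) • P - 1) * Ring.inverse (absOp ((2 : ℂ) • P - 1))))) =
          1 - P) := by
  obtain ⟨hJ, hJJ⟩ := hJ
  have ht := two_smul_sub_one_mul_self hP
  set t := (2 : ℂ) • P - 1
  have hau := isUnit_abs_of_mul_self_eq_one ht
  have hvat : t * (CFC.abs t)⁻¹ʳ * CFC.abs t = t := Ring.inverse_mul_cancel_right _ _ hau
  have hvav : t * (CFC.abs t)⁻¹ʳ * CFC.abs t * (t * (CFC.abs t)⁻¹ʳ) = (CFC.abs t)⁻¹ʳ := by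
    rw [hvat, ← mul_assoc, ht, one_mul]
  change _ ↔ (IsSelfAdjoint _ ∧ _) ∧ _
  rw [show absOp t = CFC.abs t from rfl, conj_eq_one_sub_star_iff hJJ,
    conj_eq_neg_star_iff hJ hJJ (isSelfAdjoint_mul_inverse_abs ht) (mul_inverse_abs_mul_self ht)
      (CFC.abs_nonneg t) hau hvav hvat,
    I_smul_conj_isSymmetry_iff hJ hJJ (isSelfAdjoint_mul_inverse_abs ht)
      (mul_inverse_abs_mul_self ht) hvat, hvav]
end
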